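/- Let P be a finite p-group, and suppose Δ(P) is the diagonal subgroup of P × P. Then Δ(P) is expansive in P × P if and only if for every x ∈ P, the condition that the set of commutators {[y,x] : y ∈ P} meets Z(P) only in the identity implies x ∈ Z(P). -/

import Mathlib

/-!
For `g = (g₁, g₂) ∈ P × P` put `c = g₁⁻¹ g₂`. Then `Δ(P)^g = {(y, c⁻¹ y c)}`, so `Δ(P)^g = Δ(P)`
iff `c ∈ Z(P)`, and `N(Δ(P))` consists of the `g` with central `c`. Central factors drop out of
commutators, so commutators of `N(Δ(P))` lie in `Δ(P)` and `Z_{P×P}(Δ(P)) = N(Δ(P))`. Hence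
`(y, c⁻¹ y c)` lies in `Z_{P×P}(Δ(P))` iff `[y, c] ∈ Z(P)`, and in `Δ(P)` iff `[y, c] = 1`:
expansivity at `g` is exactly the stated condition at `x = c`.
-/

/-- `H ^ g = g⁻¹ H g`, the conjugate of `H` by `g`. -/
def conjSub {G : Type*} [Group G] (H : Subgroup G) (g : G) : Subgroup G :=
  Subgroup.map (MulAut.conj g⁻¹).toMonoidHom H

/-- `Z_G(Q)`: the subgroup of `N_G(Q)` containing `Q` with
`Z_G(Q)/Q = Z(N_G(Q)/Q)`. -/
def Zsub {G : Type*} [Group G] (Q : Subgroup G) : Subgroup G :=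
  Subgroup.map (Subgroup.normalizer (Q : Set G)).subtype
    (Subgroup.comap (QuotientGroup.mk' (Q.subgroupOf (Subgroup.normalizer (Q : Set G))))
      (Subgroup.center ((Subgroup.normalizer (Q : Set G)) ⧸ Q.subgroupOf (Subgroup.normalizer (Q : Set G)))))

/-- `Q` is expansive in the finite `p`-group `G`:
for all `g`, `Q^g ∩ Z_G(Q) ≤ Q` implies `Q^g = Q`. -/
def IsExpansiveP {G : Type*} [Group G] (Q : Subgroup G) : Prop :=
  ∀ g : G, conjSub Q g ⊓ Zsub Q ≤ Q → conjSub Q g = Q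

/-- The diagonal subgroup of `P × P`. -/
def diagSubgroup (P : Type*) [Group P] : Subgroup (P × P) :=
  ((MonoidHom.id P).prod (MonoidHom.id P)).range

section General

variable {G : Type*} [Group G]

lemma mem_conjSub_iff {H : Subgroup G} {g x : G} : x ∈ conjSub H g ↔ g * x * g⁻¹ ∈ H := by
  simp only [conjSub, Subgroup.mem_map, MulEquiv.coe_toMonoidHom, MulAut.conj_apply, inv_inv]
  constructor
  · rintro ⟨y, hy, rfl⟩
    simpa [mul_assoc] using hy
  · intro h
    exact ⟨_, h, by group⟩

lemma mem_normalizer_iff_conjSub_eq {H : Subgroup G} {g : G} :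
    g ∈ Subgroup.normalizer (H : Set G) ↔ conjSub H g = H := by
  simp only [Subgroup.mem_normalizer_iff, SetLike.ext_iff, mem_conjSub_iff]
  exact forall_congr' fun _ => Iff.comm

lemma mem_Zsub_iff {Q : Subgroup G} {g : G} :
    g ∈ Zsub Q ↔ g ∈ Subgroup.normalizer (Q : Set G) ∧
      ∀ m ∈ Subgroup.normalizer (Q : Set G), g⁻¹ * m⁻¹ * g * m ∈ Q := by
  constructor
  · rintro ⟨n, hn, rfl⟩
    refine ⟨n.2, fun m hm => ?_⟩
    have := Subgroup.mem_center_iff.mp hn (QuotientGroup.mk' _ ⟨m, hm⟩)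
    rw [← map_mul, ← map_mul, QuotientGroup.mk'_apply, QuotientGroup.mk'_apply, QuotientGroup.eq,
      Subgroup.mem_subgroupOf] at this
    simpa [mul_assoc] using this
  · rintro ⟨hg, h⟩
    refine ⟨⟨g, hg⟩, Subgroup.mem_center_iff.mpr fun q => ?_, rfl⟩
    induction q using QuotientGroup.induction_on with
    | H m =>
      rw [QuotientGroup.mk'_apply, ← QuotientGroup.mk_mul, ← QuotientGroup.mk_mul,
        QuotientGroup.eq, Subgroup.mem_subgroupOf]
      simpa [mul_assoc] using h m m.2

lemma conj_eq_self_of_mem_center {z : G} (hz : z ∈ Subgroup.center G) (x : G) :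
    z⁻¹ * x * z = x := by
  rw [mul_assoc, Subgroup.mem_center_iff.mp hz x, inv_mul_cancel_left]

lemma commutator_mul_central {a b z w : G} (hz : z ∈ Subgroup.center G)
    (hw : w ∈ Subgroup.center G) :
    (a * z)⁻¹ * (b * w)⁻¹ * (a * z) * (b * w) = a⁻¹ * b⁻¹ * a * b :=
  calc (a * z)⁻¹ * (b * w)⁻¹ * (a * z) * (b * w)
      = z⁻¹ * (a⁻¹ * (b * w)⁻¹ * a) * z * (b * w) := by group
    _ = a⁻¹ * (w⁻¹ * (b⁻¹ * a * b) * w) := by rw [conj_eq_self_of_mem_center hz]; group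
    _ = a⁻¹ * b⁻¹ * a * b := by rw [conj_eq_self_of_mem_center hw]; group

end General

section Diagonal

variable {P : Type*} [Group P]

lemma mem_diagSubgroup {x : P × P} : x ∈ diagSubgroup P ↔ x.1 = x.2 := by
  constructor
  · rintro ⟨y, rfl⟩
    rfl
  · intro h
    exact ⟨x.1, Prod.ext rfl h⟩

lemma mem_conjSub_diagSubgroup {g x : P × P} :
    x ∈ conjSub (diagSubgroup P) g ↔ x.2 = (g.1⁻¹ * g.2)⁻¹ * x.1 * (g.1⁻¹ * g.2) := by
  rw [mem_conjSub_iff, mem_diagSubgroup]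
  simp only [Prod.fst_mul, Prod.snd_mul, Prod.fst_inv, Prod.snd_inv]
  constructor
  · intro h
    calc x.2 = g.2⁻¹ * (g.2 * x.2 * g.2⁻¹) * g.2 := by group
      _ = _ := by rw [← h]; group
  · intro h
    rw [h]
    group

lemma conjSub_diagSubgroup_eq_iff {g : P × P} :
    conjSub (diagSubgroup P) g = diagSubgroup P ↔ g.1⁻¹ * g.2 ∈ Subgroup.center P := by
  set c := g.1⁻¹ * g.2
  constructor
  · intro h
    refine Subgroup.mem_center_iff.mpr fun y => ?_
    have hy : (y, y) ∈ conjSub (diagSubgroup P) g := by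
      rw [h]
      exact mem_diagSubgroup.mpr rfl
    have hy' : y = c⁻¹ * y * c := mem_conjSub_diagSubgroup.mp hy
    calc y * c = c * (c⁻¹ * y * c) := by group
      _ = c * y := by rw [← hy']
  · intro hc
    ext x
    rw [mem_conjSub_diagSubgroup, mem_diagSubgroup, conj_eq_self_of_mem_center hc, eq_comm]

lemma mem_normalizer_diagSubgroup {g : P × P} :
    g ∈ Subgroup.normalizer (diagSubgroup P : Set (P × P)) ↔ g.1⁻¹ * g.2 ∈ Subgroup.center P :=
  mem_normalizer_iff_conjSub_eq.trans conjSub_diagSubgroup_eq_iff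

lemma mem_Zsub_diagSubgroup {g : P × P} :
    g ∈ Zsub (diagSubgroup P) ↔ g.1⁻¹ * g.2 ∈ Subgroup.center P := by
  rw [mem_Zsub_iff, mem_normalizer_diagSubgroup, and_iff_left_iff_imp]
  intro hg m hm
  rw [mem_normalizer_diagSubgroup] at hm
  have := commutator_mul_central (a := g.1) (b := m.1) hg hm
  simp only [mul_inv_cancel_left] at this
  simpa [mem_diagSubgroup] using this.symm

lemma conjSub_diagSubgroup_inf_Zsub_le_iff {g : P × P} :
    conjSub (diagSubgroup P) g ⊓ Zsub (diagSubgroup P) ≤ diagSubgroup P ↔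
      ∀ y : P, y⁻¹ * (g.1⁻¹ * g.2)⁻¹ * y * (g.1⁻¹ * g.2) ∈ Subgroup.center P →
        y⁻¹ * (g.1⁻¹ * g.2)⁻¹ * y * (g.1⁻¹ * g.2) = 1 := by
  set c := g.1⁻¹ * g.2
  have hassoc : ∀ y : P, y⁻¹ * c⁻¹ * y * c = y⁻¹ * (c⁻¹ * y * c) := fun y => by group
  constructor
  · intro h y hy
    have hx : (y, c⁻¹ * y * c) ∈ conjSub (diagSubgroup P) g ⊓ Zsub (diagSubgroup P) :=
      ⟨mem_conjSub_diagSubgroup.mpr rfl, mem_Zsub_diagSubgroup.mpr (hassoc y ▸ hy)⟩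
    rw [hassoc, inv_mul_eq_one]
    exact mem_diagSubgroup.mp (h hx)
  · intro h x hx
    obtain ⟨hxg, hxZ⟩ := Subgroup.mem_inf.mp hx
    rw [mem_conjSub_diagSubgroup] at hxg
    rw [mem_Zsub_diagSubgroup, hxg, ← hassoc] at hxZ
    rw [mem_diagSubgroup, hxg, ← inv_mul_eq_one, ← hassoc]
    exact h x.1 hxZ

end Diagonal

theorem diag_expansive_iff_general (P : Type*) [Group P] :
    IsExpansiveP (diagSubgroup P) ↔
      ∀ x : P,
        (∀ y : P, y⁻¹ * x⁻¹ * y * x ∈ Subgroup.center P → y⁻¹ * x⁻¹ * y * x = 1) →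
        x ∈ Subgroup.center P := by
  simp only [IsExpansiveP, conjSub_diagSubgroup_inf_Zsub_le_iff, conjSub_diagSubgroup_eq_iff]
  constructor
  · intro h x
    simpa using h (1, x)
  · intro h g
    exact h _

/-- `Δ(P)` is expansive in `P × P` if and only if for every `x ∈ P`,
`[P,x] ∩ Z(P) = {1}` implies `x ∈ Z(P)`, where `[P,x]` is the set of
commutators `[y,x] = y⁻¹x⁻¹yx` for `y ∈ P`. -/
theorem diag_expansive_iff {p : ℕ} [Fact p.Prime]
    (P : Type*) [Group P] [Finite P] (hP : IsPGroup p P) :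
    IsExpansiveP (diagSubgroup P) ↔
      ∀ x : P,
        (∀ y : P, y⁻¹ * x⁻¹ * y * x ∈ Subgroup.center P → y⁻¹ * x⁻¹ * y * x = 1) →
        x ∈ Subgroup.center P :=
  diag_expansive_iff_general P
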